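/- Case (b) of Theorem 1's proof: If ⟪g, d⟫ > ε ‖g‖ ‖d‖ (i.e. Φ(1) < −ε; note this implies the violation hypothesis −⟪g, d⟫ < ε ‖g‖ ‖d‖), then P(0) > 0, P(1) > 0, and P has exactly two distinct roots in the open interval (0,1); the smaller of the two satisfies Φ(β) = ε and the larger satisfies Φ(β) = −ε. -/
import Mathlib


open scoped RealInnerProductSpace

noncomputable def dvec {n : ℕ} (g d : EuclideanSpace ℝ (Fin n)) (ξ β : ℝ) :
    EuclideanSpace ℝ (Fin n) :=
  β • d - ((1 - β) * ξ) • g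

noncomputable def Phi {n : ℕ} (g d : EuclideanSpace ℝ (Fin n)) (ξ β : ℝ) : ℝ :=
  -⟪g, dvec g d ξ β⟫ / (‖g‖ * ‖dvec g d ξ β‖)

noncomputable def Ppoly {n : ℕ} (g d : EuclideanSpace ℝ (Fin n)) (ε ξ β : ℝ) : ℝ :=
  (⟪g, d⟫ ^ 2 - ε ^ 2 * ‖g‖ ^ 2 * ‖d‖ ^ 2
      - (-2 * (1 - ε ^ 2) * ξ * ‖g‖ ^ 2 * (ξ * ‖g‖ ^ 2 + ⟪g, d⟫))
      - (1 - ε ^ 2) * ξ ^ 2 * ‖g‖ ^ 4) * β ^ 2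
    + (-2 * (1 - ε ^ 2) * ξ * ‖g‖ ^ 2 * (ξ * ‖g‖ ^ 2 + ⟪g, d⟫)) * β
    + (1 - ε ^ 2) * ξ ^ 2 * ‖g‖ ^ 4

open scoped RealInnerProductSpace in
lemma case_b_scalar (u G Dn ε ξ : ℝ) (hG : 0 < G) (hDn : 0 < Dn) (hξ : 0 < ξ)
    (hε0 : 0 < ε) (hε1 : ε < 1) (hK : 0 < G * Dn - u ^ 2)
    (hgt : ε ^ 2 * G * Dn < u ^ 2) (hu : 0 < u) :
    ∃ β₁ β₂ : ℝ, β₁ ∈ Set.Ioo (0:ℝ) 1 ∧ β₂ ∈ Set.Ioo (0:ℝ) 1 ∧ β₁ < β₂ ∧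
      (∀ β : ℝ, (1 - ε ^ 2) * ((u + ξ * G) * β - ξ * G) ^ 2
          - ε ^ 2 * (G * Dn - u ^ 2) * β ^ 2 = 0 ↔ (β = β₁ ∨ β = β₂)) ∧
      ((u + ξ * G) * β₁ - ξ * G) < 0 ∧ 0 < ((u + ξ * G) * β₂ - ξ * G) ∧
      ε ^ 2 * (((u + ξ * G) * β₁ - ξ * G) ^ 2 + (G * Dn - u ^ 2) * β₁ ^ 2)
        = ((u + ξ * G) * β₁ - ξ * G) ^ 2 ∧
      ε ^ 2 * (((u + ξ * G) * β₂ - ξ * G) ^ 2 + (G * Dn - u ^ 2) * β₂ ^ 2)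
        = ((u + ξ * G) * β₂ - ξ * G) ^ 2 := by
  have h1ε : (0:ℝ) < 1 - ε ^ 2 := by nlinarith
  set s : ℝ := Real.sqrt (1 - ε ^ 2) with hs
  set K : ℝ := G * Dn - u ^ 2 with hKdef
  set t : ℝ := ε * Real.sqrt K with ht
  have hspos : 0 < s := Real.sqrt_pos.mpr h1ε
  have hs2 : s ^ 2 = 1 - ε ^ 2 := Real.sq_sqrt h1ε.le
  have htpos : 0 < t := mul_pos hε0 (Real.sqrt_pos.mpr hK)
  have ht2 : t ^ 2 = ε ^ 2 * K := by rw [ht, mul_pow, Real.sq_sqrt hK.le]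
  clear_value s t K
  have hapos : 0 < u + ξ * G := by positivity
  have hsu : t < s * u := by
    have h2 : t ^ 2 < (s * u) ^ 2 := by
      rw [ht2, mul_pow, hs2]; nlinarith
    nlinarith [mul_pos hspos hu]
  have hden2 : 0 < s * (u + ξ * G) - t := by nlinarith [mul_pos hspos (mul_pos hξ hG)]
  have hden1 : 0 < s * (u + ξ * G) + t := by nlinarith
  have hMpos : 0 < s * (ξ * G) := by positivity
  set β₁ : ℝ := s * (ξ * G) / (s * (u + ξ * G) + t) with hb1
  set β₂ : ℝ := s * (ξ * G) / (s * (u + ξ * G) - t) with hb2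
  have he1 : s * ((u + ξ * G) * β₁ - ξ * G) + t * β₁ = 0 := by
    rw [hb1]; field_simp; ring
  have he2 : s * ((u + ξ * G) * β₂ - ξ * G) - t * β₂ = 0 := by
    rw [hb2]; field_simp; ring
  have hb1pos : 0 < β₁ := div_pos hMpos hden1
  have hb2pos : 0 < β₂ := div_pos hMpos hden2
  have hb1lt : β₁ < 1 := by
    rw [hb1, div_lt_one hden1]; nlinarith [mul_pos hspos hu]
  have hb2lt : β₂ < 1 := by
    rw [hb2, div_lt_one hden2]; nlinarith [mul_pos hspos hu]
  have hb12 : β₁ < β₂ := by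
    rw [hb1, hb2]
    exact div_lt_div_of_pos_left hMpos hden2 (by linarith)
  clear_value β₁ β₂
  have hf1neg : (u + ξ * G) * β₁ - ξ * G < 0 := by
    have hX : s * ((u + ξ * G) * β₁ - ξ * G) < 0 := by linarith [mul_pos htpos hb1pos]
    by_contra h
    push_neg at h
    linarith [mul_nonneg hspos.le h]
  have hf2pos : 0 < (u + ξ * G) * β₂ - ξ * G := by
    have hX : 0 < s * ((u + ξ * G) * β₂ - ξ * G) := by linarith [mul_pos htpos hb2pos]
    by_contra h
    push_neg at h
    linarith [mul_nonpos_of_nonneg_of_nonpos hspos.le h]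
  have hsq1 : s ^ 2 * ((u + ξ * G) * β₁ - ξ * G) ^ 2 = t ^ 2 * β₁ ^ 2 := by
    linear_combination (s * ((u + ξ * G) * β₁ - ξ * G) - t * β₁) * he1
  have hsq2 : s ^ 2 * ((u + ξ * G) * β₂ - ξ * G) ^ 2 = t ^ 2 * β₂ ^ 2 := by
    linear_combination (s * ((u + ξ * G) * β₂ - ξ * G) + t * β₂) * he2
  refine ⟨β₁, β₂, ⟨hb1pos, hb1lt⟩, ⟨hb2pos, hb2lt⟩, hb12, ?_, hf1neg, hf2pos, ?_, ?_⟩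
  · intro β
    have hfac : (1 - ε ^ 2) * ((u + ξ * G) * β - ξ * G) ^ 2 - ε ^ 2 * K * β ^ 2
        = (s * ((u + ξ * G) * β - ξ * G) - t * β) * (s * ((u + ξ * G) * β - ξ * G) + t * β) := by
      have h : (s * ((u + ξ * G) * β - ξ * G) - t * β) * (s * ((u + ξ * G) * β - ξ * G) + t * β)
          = s ^ 2 * ((u + ξ * G) * β - ξ * G) ^ 2 - t ^ 2 * β ^ 2 := by ring
      rw [h, hs2, ht2]
    rw [hfac]
    constructor
    · intro h
      rcases mul_eq_zero.mp h with h' | h'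
      · right
        have hz : (β - β₂) * (s * (u + ξ * G) - t) = 0 := by linear_combination h' - he2
        rcases mul_eq_zero.mp hz with h'' | h''
        · linarith
        · exact absurd h'' hden2.ne'
      · left
        have hz : (β - β₁) * (s * (u + ξ * G) + t) = 0 := by linear_combination h' - he1
        rcases mul_eq_zero.mp hz with h'' | h''
        · linarith
        · exact absurd h'' hden1.ne'
    · rintro (rfl | rfl)
      · exact mul_eq_zero_of_right _ he1
      · exact mul_eq_zero_of_left he2 _
  · linear_combination -hsq1 + ((u + ξ * G) * β₁ - ξ * G) ^ 2 * hs2 - β₁ ^ 2 * ht2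
  · linear_combination -hsq2 + ((u + ξ * G) * β₂ - ξ * G) ^ 2 * hs2 - β₂ ^ 2 * ht2



/-- Case (b) of Theorem 1's proof: if ⟪g, d⟫ > ε ‖g‖ ‖d‖ (which implies the violation
hypothesis −⟪g, d⟫ < ε ‖g‖ ‖d‖), then P(0) > 0, P(1) > 0, and P has exactly two distinct
roots in (0,1); the smaller satisfies Φ = ε and the larger satisfies Φ = −ε. -/
theorem Ppoly_case_b {n : ℕ} (g d : EuclideanSpace ℝ (Fin n))
    (hind : LinearIndependent ℝ ![g, d]) (ε ξ : ℝ)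
    (hε : ε ∈ Set.Ioo (0 : ℝ) 1) (hξ : 0 < ξ)
    (hgt : ⟪g, d⟫ > ε * ‖g‖ * ‖d‖) :
    -⟪g, d⟫ < ε * ‖g‖ * ‖d‖ ∧
    0 < Ppoly g d ε ξ 0 ∧ 0 < Ppoly g d ε ξ 1 ∧
    ∃ β₁ β₂ : ℝ, β₁ ∈ Set.Ioo (0 : ℝ) 1 ∧ β₂ ∈ Set.Ioo (0 : ℝ) 1 ∧ β₁ < β₂ ∧
      Ppoly g d ε ξ β₁ = 0 ∧ Ppoly g d ε ξ β₂ = 0 ∧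
      (∀ β ∈ Set.Ioo (0 : ℝ) 1, Ppoly g d ε ξ β = 0 → β = β₁ ∨ β = β₂) ∧
      Phi g d ξ β₁ = ε ∧ Phi g d ξ β₂ = -ε := by
  obtain ⟨hε0, hε1⟩ := hε
  have hpair := LinearIndependent.pair_iff.mp hind
  have hg : g ≠ 0 := by
    intro h
    have := (hpair 1 0 (by simp [h])).1
    norm_num at this
  have hd : d ≠ 0 := by
    intro h
    have := (hpair 0 1 (by simp [h])).2
    norm_num at this
  have hng : 0 < ‖g‖ := norm_pos_iff.mpr hg
  have hnd : 0 < ‖d‖ := norm_pos_iff.mpr hd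
  have hu : 0 < ⟪g, d⟫ := lt_trans (by positivity) hgt
  have hKpos : 0 < ‖g‖ ^ 2 * ‖d‖ ^ 2 - ⟪g, d⟫ ^ 2 := by
    have hw : (‖g‖ ^ 2) • d - ⟪g, d⟫ • g ≠ 0 := by
      intro h
      have h2 : (-⟪g, d⟫) • g + (‖g‖ ^ 2) • d = 0 := by
        rw [← h]; module
      have := (hpair _ _ h2).2
      nlinarith
    have hw2 : 0 < ‖(‖g‖ ^ 2) • d - ⟪g, d⟫ • g‖ ^ 2 := pow_pos (norm_pos_iff.mpr hw) 2
    have hw3 : ‖(‖g‖ ^ 2) • d - ⟪g, d⟫ • g‖ ^ 2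
        = ‖g‖ ^ 2 * (‖g‖ ^ 2 * ‖d‖ ^ 2 - ⟪g, d⟫ ^ 2) := by
      rw [← real_inner_self_eq_norm_sq]
      simp only [inner_sub_left, inner_sub_right, real_inner_smul_left, real_inner_smul_right,
        real_inner_self_eq_norm_sq, real_inner_comm d g, norm_smul, Real.norm_eq_abs,
        mul_pow, sq_abs]
      ring
    nlinarith
  have hgt2 : ε ^ 2 * ‖g‖ ^ 2 * ‖d‖ ^ 2 < ⟪g, d⟫ ^ 2 := by
    have h := mul_self_lt_mul_self (by positivity : (0:ℝ) ≤ ε * ‖g‖ * ‖d‖) hgt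
    nlinarith [h]
  have hf : ∀ β : ℝ, ⟪g, dvec g d ξ β⟫ = (⟪g, d⟫ + ξ * ‖g‖ ^ 2) * β - ξ * ‖g‖ ^ 2 := by
    intro β
    simp only [dvec, inner_sub_right, real_inner_smul_right, real_inner_self_eq_norm_sq]
    ring
  have hq : ∀ β : ℝ, ‖g‖ ^ 2 * ‖dvec g d ξ β‖ ^ 2
      = ((⟪g, d⟫ + ξ * ‖g‖ ^ 2) * β - ξ * ‖g‖ ^ 2) ^ 2
        + (‖g‖ ^ 2 * ‖d‖ ^ 2 - ⟪g, d⟫ ^ 2) * β ^ 2 := by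
    intro β
    have h1 : ‖dvec g d ξ β‖ ^ 2
        = β ^ 2 * ‖d‖ ^ 2 - 2 * (β * ((1 - β) * ξ) * ⟪g, d⟫) + ((1 - β) * ξ) ^ 2 * ‖g‖ ^ 2 := by
      rw [← real_inner_self_eq_norm_sq]
      simp only [dvec, inner_sub_left, inner_sub_right, real_inner_smul_left,
        real_inner_smul_right, real_inner_self_eq_norm_sq, real_inner_comm d g, norm_smul,
        Real.norm_eq_abs, mul_pow, sq_abs]
      ring
    rw [h1]; ring
  have hPid : ∀ β : ℝ, Ppoly g d ε ξ β
      = (1 - ε ^ 2) * ((⟪g, d⟫ + ξ * ‖g‖ ^ 2) * β - ξ * ‖g‖ ^ 2) ^ 2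
        - ε ^ 2 * (‖g‖ ^ 2 * ‖d‖ ^ 2 - ⟪g, d⟫ ^ 2) * β ^ 2 := by
    intro β
    simp only [Ppoly]
    ring
  have h1ε : (0:ℝ) < 1 - ε ^ 2 := by nlinarith
  refine ⟨by linarith [mul_pos (mul_pos hε0 hng) hnd], ?_, ?_, ?_⟩
  · rw [hPid 0]
    have : (1 - ε ^ 2) * ((⟪g, d⟫ + ξ * ‖g‖ ^ 2) * 0 - ξ * ‖g‖ ^ 2) ^ 2
        - ε ^ 2 * (‖g‖ ^ 2 * ‖d‖ ^ 2 - ⟪g, d⟫ ^ 2) * 0 ^ 2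
        = (1 - ε ^ 2) * (ξ * ‖g‖ ^ 2) ^ 2 := by ring
    rw [this]
    positivity
  · rw [hPid 1]
    have : (1 - ε ^ 2) * ((⟪g, d⟫ + ξ * ‖g‖ ^ 2) * 1 - ξ * ‖g‖ ^ 2) ^ 2
        - ε ^ 2 * (‖g‖ ^ 2 * ‖d‖ ^ 2 - ⟪g, d⟫ ^ 2) * 1 ^ 2
        = ⟪g, d⟫ ^ 2 - ε ^ 2 * (‖g‖ ^ 2 * ‖d‖ ^ 2) := by ring
    rw [this]
    nlinarith
  · obtain ⟨β₁, β₂, hm1, hm2, h12, hiff, hf1neg, hf2pos, hE1, hE2⟩ :=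
      case_b_scalar ⟪g, d⟫ (‖g‖ ^ 2) (‖d‖ ^ 2) ε ξ (by positivity) (by positivity) hξ
        hε0 hε1 hKpos hgt2 hu
    have hnorm : ∀ β : ℝ,
        ε ^ 2 * (((⟪g, d⟫ + ξ * ‖g‖ ^ 2) * β - ξ * ‖g‖ ^ 2) ^ 2
            + (‖g‖ ^ 2 * ‖d‖ ^ 2 - ⟪g, d⟫ ^ 2) * β ^ 2)
          = ((⟪g, d⟫ + ξ * ‖g‖ ^ 2) * β - ξ * ‖g‖ ^ 2) ^ 2 →
        (‖g‖ * ‖dvec g d ξ β‖) * ε = |(⟪g, d⟫ + ξ * ‖g‖ ^ 2) * β - ξ * ‖g‖ ^ 2| := by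
      intro β hE
      have h1 : ((‖g‖ * ‖dvec g d ξ β‖) * ε) ^ 2
          = ((⟪g, d⟫ + ξ * ‖g‖ ^ 2) * β - ξ * ‖g‖ ^ 2) ^ 2 := by
        have h0 := hq β
        linear_combination ε ^ 2 * h0 + hE
      have h2 : 0 ≤ (‖g‖ * ‖dvec g d ξ β‖) * ε := by positivity
      calc (‖g‖ * ‖dvec g d ξ β‖) * ε
          = Real.sqrt (((‖g‖ * ‖dvec g d ξ β‖) * ε) ^ 2) := (Real.sqrt_sq h2).symm
        _ = Real.sqrt (((⟪g, d⟫ + ξ * ‖g‖ ^ 2) * β - ξ * ‖g‖ ^ 2) ^ 2) := by rw [h1]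
        _ = |(⟪g, d⟫ + ξ * ‖g‖ ^ 2) * β - ξ * ‖g‖ ^ 2| := Real.sqrt_sq_eq_abs _
    refine ⟨β₁, β₂, hm1, hm2, h12, ?_, ?_, ?_, ?_, ?_⟩
    · rw [hPid]; exact (hiff β₁).mpr (Or.inl rfl)
    · rw [hPid]; exact (hiff β₂).mpr (Or.inr rfl)
    · intro β _ hroot
      exact (hiff β).mp (by rw [← hPid]; exact hroot)
    · -- Phi β₁ = ε
      have hA := hnorm β₁ hE1
      rw [abs_of_neg hf1neg] at hA
      have hden : ‖g‖ * ‖dvec g d ξ β₁‖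
          = -((⟪g, d⟫ + ξ * ‖g‖ ^ 2) * β₁ - ξ * ‖g‖ ^ 2) / ε :=
        (eq_div_iff hε0.ne').mpr hA
      have hf1ne : (⟪g, d⟫ + ξ * ‖g‖ ^ 2) * β₁ - ξ * ‖g‖ ^ 2 ≠ 0 := hf1neg.ne
      simp only [Phi, hf β₁, hden]
      rw [div_div_eq_mul_div, mul_div_cancel_left₀ ε (neg_ne_zero.mpr hf1ne)]
    · -- Phi β₂ = -ε
      have hA := hnorm β₂ hE2
      rw [abs_of_pos hf2pos] at hA
      have hden : ‖g‖ * ‖dvec g d ξ β₂‖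
          = ((⟪g, d⟫ + ξ * ‖g‖ ^ 2) * β₂ - ξ * ‖g‖ ^ 2) / ε :=
        (eq_div_iff hε0.ne').mpr hA
      have hf2ne : (⟪g, d⟫ + ξ * ‖g‖ ^ 2) * β₂ - ξ * ‖g‖ ^ 2 ≠ 0 := hf2pos.ne'
      simp only [Phi, hf β₂, hden]
      rw [neg_div, div_div_eq_mul_div, mul_div_cancel_left₀ ε hf2ne]
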